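/- For Boolean functions f, g with k := Alt(f), ℓ := Alt(g), a := f(0,…,0), b := g(0,…,0): f is an M-minor of g (i.e., f = g(h_1,…,h_m) for some monotone Boolean functions h_i) if and only if k < ℓ or (k, a) = (ℓ, b), where M is the clone of all monotone Boolean functions. -/

import Mathlib

/-!
Write `d_f(x)` for the length of a longest `f`-alternating chain below `x`, so that
`Alt f = d_f(⊤)`. A longest chain starts where `f` takes the value `f ⊥` and ends where it takes
the value `f x` (otherwise prepend `⊥` or append `x`), hence `f x = f ⊥ xor (d_f(x) odd)`.

If `f = g ∘ φ` with `φ` monotone, `φ` carries alternating chains of `f` to alternating chains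
of `g`, so `Alt f ≤ Alt g`, and `⊥` can still be prepended to the image when `f ⊥ ≠ g ⊥`.
Conversely, let `c` be a longest alternating chain of `g` starting at a point where `g` takes the
value `f ⊥` (if `f ⊥ ≠ g ⊥`, drop the first point of a longest chain, which costs one unit of
length and so needs `Alt f < Alt g`); then `φ x := c (d_f(x))` is monotone, and `f = g ∘ φ` by
the parity formula.
A family of monotone `h_i` is the same as one monotone map into the cube.
-/

/-- The alternation number of a Boolean function `f`: the length of the longest
chain in `({0,1}ⁿ, ≤)` along which the value of `f` alternates. -/
noncomputable def altNum {n : ℕ} (f : (Fin n → Bool) → Bool) : ℕ :=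
  sSup { d | ∃ a : Fin (d + 1) → (Fin n → Bool),
    StrictMono a ∧ ∀ i : Fin d, f (a i.castSucc) ≠ f (a i.succ) }

variable {α β γ : Type*}

section Preorder

variable [Preorder α]

def altRel (f : α → β) : SetRel α α := {p | p.1 < p.2 ∧ f p.1 ≠ f p.2}

@[simp]
lemma mem_altRel {f : α → β} {x y : α} : (x, y) ∈ altRel f ↔ x < y ∧ f x ≠ f y := Iff.rfl

lemma altRel_le_lt (f : α → β) : altRel f ≤ {(a, b) : α × α | a < b} := fun _ h => h.1

def altRelHom [PartialOrder γ] {f : α → β} {g : γ → β} {φ : α → γ} (hφ : Monotone φ)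
    (hfg : ∀ x, f x = g (φ x)) : (altRel f).Hom (altRel g) where
  toFun := φ
  map_rel' {x y} h := by
    have hne : g (φ x) ≠ g (φ y) := by simpa only [hfg] using h.2
    exact ⟨(hφ h.1.le).lt_of_ne fun he => hne (congrArg g he), hne⟩

-- Chains ending below `x`, rather than at `x`, make monotonicity in `x` immediate.
noncomputable def altDepth (f : α → β) (x : α) : ℕ :=
  sSup {n | ∃ p : RelSeries (altRel f), p.length = n ∧ p.last ≤ x}

lemma nonempty_altDepth_set (f : α → β) (x : α) :
    {n | ∃ p : RelSeries (altRel f), p.length = n ∧ p.last ≤ x}.Nonempty :=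
  ⟨0, RelSeries.singleton _ x, rfl, le_rfl⟩

lemma apply_eq_xor_bodd {f : α → Bool} (p : RelSeries (altRel f)) (i : Fin (p.length + 1)) :
    f (p i) = xor i.val.bodd (f p.head) := by
  induction i using Fin.induction with
  | zero => simp [RelSeries.head]
  | succ i ih =>
    rw [Bool.eq_not.2 (p.step i).2.symm, ih]
    simp [Nat.bodd_succ]

end Preorder

section Finite

variable [PartialOrder α] [Finite α]

lemma bddAbove_altDepth_set (f : α → β) (x : α) :
    BddAbove {n | ∃ p : RelSeries (altRel f), p.length = n ∧ p.last ≤ x} := by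
  cases nonempty_fintype α
  exact ⟨Fintype.card α, fun _ ⟨p, hp, _⟩ =>
    hp ▸ (LTSeries.length_lt_card (p.ofLE (altRel_le_lt f))).le⟩

lemma length_le_altDepth {f : α → β} (p : RelSeries (altRel f)) {x : α} (hx : p.last ≤ x) :
    p.length ≤ altDepth f x :=
  le_csSup (bddAbove_altDepth_set f x) ⟨p, rfl, hx⟩

lemma exists_length_eq_altDepth (f : α → β) (x : α) :
    ∃ p : RelSeries (altRel f), p.length = altDepth f x ∧ p.last ≤ x :=
  Nat.sSup_mem (nonempty_altDepth_set f x) (bddAbove_altDepth_set f x)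

lemma altDepth_mono (f : α → β) : Monotone (altDepth f) := fun _ _ hxy =>
  csSup_le_csSup (bddAbove_altDepth_set f _) (nonempty_altDepth_set f _)
    fun _ ⟨p, hp, hx⟩ => ⟨p, hp, hx.trans hxy⟩

lemma length_lt_altDepth_of_last_ne {f : α → β} (p : RelSeries (altRel f)) {x : α}
    (hx : p.last ≤ x) (hne : f p.last ≠ f x) : p.length < altDepth f x :=
  length_le_altDepth (x := x) (p.snoc x (mem_altRel.2 ⟨hx.lt_of_ne (hne <| congrArg f ·), hne⟩))
    (by simp)

lemma length_lt_altDepth_of_head_ne [OrderBot α] {f : α → β} (p : RelSeries (altRel f))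
    {x : α} (hx : p.last ≤ x) (hne : f p.head ≠ f ⊥) : p.length < altDepth f x := by
  simpa using length_le_altDepth (x := x)
    (p.cons ⊥ (mem_altRel.2 ⟨bot_le.lt_of_ne (hne <| congrArg f ·.symm), hne.symm⟩)) (by simpa)

lemma exists_length_eq_altDepth_head [OrderBot α] (f : α → β) (x : α) :
    ∃ p : RelSeries (altRel f), p.length = altDepth f x ∧ p.last ≤ x ∧ f p.head = f ⊥ := by
  obtain ⟨p, hp, hx⟩ := exists_length_eq_altDepth f x
  refine ⟨p, hp, hx, ?_⟩
  by_contra hne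
  exact (length_lt_altDepth_of_head_ne p hx hne).ne hp

lemma apply_eq_xor_bodd_altDepth [OrderBot α] (f : α → Bool) (x : α) :
    f x = xor (altDepth f x).bodd (f ⊥) := by
  obtain ⟨p, hp, hx, hhead⟩ := exists_length_eq_altDepth_head f x
  have hlast : f p.last = f x := by
    by_contra hne
    exact (length_lt_altDepth_of_last_ne p hx hne).ne hp
  rw [← hlast, ← hp, ← hhead]
  exact apply_eq_xor_bodd p (Fin.last _)

end Finite

section Minor

variable [PartialOrder α] [BoundedOrder α] [Finite α] {f : α → Bool}

lemma altDepth_top_le_of_monotone_comp [PartialOrder γ] [BoundedOrder γ] [Finite γ]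
    {g : γ → Bool} {φ : α → γ} (hφ : Monotone φ) (hfg : ∀ x, f x = g (φ x)) :
    altDepth f ⊤ < altDepth g ⊤ ∨ (altDepth f ⊤ = altDepth g ⊤ ∧ f ⊥ = g ⊥) := by
  obtain ⟨p, hp, -, hhead⟩ := exists_length_eq_altDepth_head f ⊤
  set q := p.map (altRelHom hφ hfg)
  have hle : altDepth f ⊤ ≤ altDepth g ⊤ := hp ▸ length_le_altDepth q le_top
  by_cases h0 : f ⊥ = g ⊥
  · exact hle.lt_or_eq.imp_right (⟨·, h0⟩)
  · have hq : g q.head ≠ g ⊥ := by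
      change g (φ p.head) ≠ g ⊥
      rwa [← hfg, hhead]
    exact .inl (hp ▸ length_lt_altDepth_of_head_ne q le_top hq)

lemma exists_monotone_comp_of_relSeries [Preorder γ] {g : γ → Bool} (p : RelSeries (altRel g))
    (hhead : g p.head = f ⊥) (hlen : altDepth f ⊤ ≤ p.length) :
    ∃ φ : α → γ, Monotone φ ∧ ∀ x, f x = g (φ x) := by
  have hlt (x : α) : altDepth f x < p.length + 1 :=
    Nat.lt_succ_of_le ((altDepth_mono f le_top).trans hlen)
  refine ⟨fun x => p ⟨altDepth f x, hlt x⟩, fun x y hxy => ?_, fun x => ?_⟩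
  · exact LTSeries.monotone (p.ofLE (altRel_le_lt g)) (Fin.mk_le_mk.2 (altDepth_mono f hxy))
  · rw [apply_eq_xor_bodd p, hhead]
    exact apply_eq_xor_bodd_altDepth f x

theorem exists_monotone_comp_iff [PartialOrder γ] [BoundedOrder γ] [Finite γ] {g : γ → Bool} :
    (∃ φ : α → γ, Monotone φ ∧ ∀ x, f x = g (φ x)) ↔
      altDepth f ⊤ < altDepth g ⊤ ∨ (altDepth f ⊤ = altDepth g ⊤ ∧ f ⊥ = g ⊥) := by
  refine ⟨fun ⟨φ, hφ, hfg⟩ => altDepth_top_le_of_monotone_comp hφ hfg, fun h => ?_⟩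
  obtain ⟨p, hp, -, hhead⟩ := exists_length_eq_altDepth_head g ⊤
  by_cases h0 : f ⊥ = g ⊥
  · exact exists_monotone_comp_of_relSeries p (hhead.trans h0.symm)
      (hp ▸ h.elim le_of_lt (·.1.le))
  · have hlt : altDepth f ⊤ < p.length := hp ▸ h.resolve_right (h0 ·.2)
    refine exists_monotone_comp_of_relSeries (p.drop ⟨1, by omega⟩) ?_ (by simp; omega)
    rw [RelSeries.head_drop]
    refine (apply_eq_xor_bodd p ⟨1, _⟩).trans ?_
    rw [hhead]
    simpa using Bool.eq_not.2 (Ne.symm h0)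

end Minor

lemma altNum_eq_altDepth_top {n : ℕ} (f : (Fin n → Bool) → Bool) : altNum f = altDepth f ⊤ := by
  unfold altNum altDepth
  congr 1
  ext d
  constructor
  · rintro ⟨a, ha, halt⟩
    exact ⟨⟨d, a, fun i => ⟨ha i.castSucc_lt_succ, halt i⟩⟩, rfl, le_top⟩
  · rintro ⟨p, rfl, -⟩
    exact ⟨p, LTSeries.strictMono (p.ofLE (altRel_le_lt f)), fun i => (p.step i).2⟩

/-- `f` is an `M`-minor of `g` (where `M` is the clone of monotone Boolean
functions) iff `Alt f < Alt g` or `(Alt f, f(0)) = (Alt g, g(0))`. -/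
theorem stmt13 {n m : ℕ} (f : (Fin (n + 1) → Bool) → Bool)
    (g : (Fin (m + 1) → Bool) → Bool) :
    (∃ h : Fin (m + 1) → (Fin (n + 1) → Bool) → Bool, (∀ i, Monotone (h i)) ∧
      ∀ x, f x = g fun i => h i x) ↔
    (altNum f < altNum g ∨
      (altNum f = altNum g ∧ f (fun _ => false) = g (fun _ => false))) := by
  rw [altNum_eq_altDepth_top, altNum_eq_altDepth_top]
  refine Iff.trans ?_ exists_monotone_comp_iff
  constructor
  · rintro ⟨h, hmono, hfg⟩
    exact ⟨fun x i => h i x, monotone_iff_apply₂.2 hmono, hfg⟩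
  · rintro ⟨φ, hφ, hfg⟩
    exact ⟨fun i x => φ x i, monotone_iff_apply₂.1 hφ, hfg⟩
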